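/- For every nonnegative integer n, ∑_{k=0}^{n} k·H_k·H_{n-k} = (n(n+1)/2)·[(H_{n+1} − 1)² − H_{n+1}^{(2)} + 1]. -/

import Mathlib

open Finset

/-- The harmonic number `H n = ∑_{k=1}^n 1/k`. -/
def H (n : ℕ) : ℚ := ∑ k ∈ Finset.range n, (1 : ℚ) / ((k : ℚ) + 1)

/-- The generalized harmonic number `H n ^ (m) = ∑_{k=1}^n 1/k^m`. -/
def Hgen (m n : ℕ) : ℚ := ∑ k ∈ Finset.range n, (1 : ℚ) / ((k : ℚ) + 1) ^ m

/-! Write `A n = ∑_{i+j=n} H_i H_j`, `B n = ∑_{i+j=n} H_i/(j+1)` and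
`C n = ∑_{i+j=n} 1/((i+1)(j+1))`. Splitting `H_{i+1} = H_i + 1/(i+1)` in the first factor
gives `A (n+1) = A n + B n` and `B (n+1) = B n + C n`, while partial fractions give
`C n = 2 H_{n+1}/(n+2)`; solving the two recurrences yields closed forms for `B` and `A`.
Pairing the terms `k` and `n-k` of the weighted sum shows that it equals `n A n / 2`. -/

namespace Finset.Nat

variable {M : Type*} [AddCommMonoid M]

lemma sum_antidiagonal_comm (f : ℕ → ℕ → M) (n : ℕ) :
    ∑ p ∈ antidiagonal n, f p.2 p.1 = ∑ p ∈ antidiagonal n, f p.1 p.2 :=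
  sum_antidiagonal_swap (f := fun p => f p.1 p.2)

lemma sum_antidiagonal_fst_eq_sum_range (f : ℕ → M) (n : ℕ) :
    ∑ p ∈ antidiagonal n, f p.1 = ∑ k ∈ range (n + 1), f k :=
  sum_antidiagonal_eq_sum_range_succ (fun i _ => f i) n

end Finset.Nat

open Finset.Nat

lemma H_zero : H 0 = 0 := rfl

lemma H_succ (n : ℕ) : H (n + 1) = H n + 1 / ((n : ℚ) + 1) :=
  sum_range_succ _ _

lemma Hgen_succ (m n : ℕ) : Hgen m (n + 1) = Hgen m n + 1 / ((n : ℚ) + 1) ^ m :=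
  sum_range_succ _ _

lemma sum_antidiagonal_inv_mul_inv (n : ℕ) :
    ∑ p ∈ antidiagonal n, 1 / (((p.1 : ℚ) + 1) * ((p.2 : ℚ) + 1)) =
      2 * H (n + 1) / ((n : ℚ) + 2) := by
  have partial_fractions : ∀ p ∈ antidiagonal n,
      1 / (((p.1 : ℚ) + 1) * ((p.2 : ℚ) + 1)) =
        (1 / ((p.1 : ℚ) + 1) + 1 / ((p.2 : ℚ) + 1)) / ((n : ℚ) + 2) := by
    intro p hp
    have hn : (n : ℚ) = p.1 + p.2 := by exact_mod_cast (mem_antidiagonal.mp hp).symm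
    rw [hn]
    field_simp
    ring
  have harmonic : ∑ p ∈ antidiagonal n, 1 / ((p.1 : ℚ) + 1) = H (n + 1) :=
    sum_antidiagonal_fst_eq_sum_range (fun k => 1 / ((k : ℚ) + 1)) n
  rw [sum_congr rfl partial_fractions, ← sum_div, sum_add_distrib, harmonic,
    sum_antidiagonal_comm (fun i _ => 1 / ((i : ℚ) + 1)), harmonic]
  ring

lemma sum_antidiagonal_H_div (n : ℕ) :
    ∑ p ∈ antidiagonal n, H p.1 / ((p.2 : ℚ) + 1) = H (n + 1) ^ 2 - Hgen 2 (n + 1) := by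
  induction n with
  | zero => simp [H, Hgen]
  | succ n ih =>
    have split : ∀ p ∈ antidiagonal n, H (p.1 + 1) / ((p.2 : ℚ) + 1) =
        H p.1 / ((p.2 : ℚ) + 1) + 1 / (((p.1 : ℚ) + 1) * ((p.2 : ℚ) + 1)) := by
      intro p _
      rw [H_succ]
      field_simp
    rw [sum_antidiagonal_succ, H_zero, zero_div, zero_add, sum_congr rfl split,
      sum_add_distrib, ih, sum_antidiagonal_inv_mul_inv, H_succ (n + 1), Hgen_succ 2 (n + 1)]
    field_simp
    push_cast
    ring

lemma sum_antidiagonal_H_mul_H (n : ℕ) :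
    ∑ p ∈ antidiagonal n, H p.1 * H p.2 =
      ((n : ℚ) + 1) * ((H (n + 1) - 1) ^ 2 - Hgen 2 (n + 1) + 1) := by
  induction n with
  | zero => simp [H, Hgen]
  | succ n ih =>
    have split : ∀ p ∈ antidiagonal n, H (p.1 + 1) * H p.2 =
        H p.1 * H p.2 + H p.2 / ((p.1 : ℚ) + 1) := by
      intro p _
      rw [H_succ]
      ring
    rw [sum_antidiagonal_succ, H_zero, zero_mul, zero_add, sum_congr rfl split,
      sum_add_distrib, ih, sum_antidiagonal_comm (fun i j => H i / ((j : ℚ) + 1)),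
      sum_antidiagonal_H_div, H_succ (n + 1), Hgen_succ 2 (n + 1)]
    field_simp
    push_cast
    ring

theorem stmt4 (n : ℕ) :
    ∑ k ∈ Finset.range (n + 1), (k : ℚ) * H k * H (n - k) =
      ((n : ℚ) * ((n : ℚ) + 1) / 2) * ((H (n + 1) - 1) ^ 2 - Hgen 2 (n + 1) + 1) := by
  set S := ∑ p ∈ antidiagonal n, (p.1 : ℚ) * H p.1 * H p.2
  have hS : ∑ k ∈ range (n + 1), (k : ℚ) * H k * H (n - k) = S :=
    (sum_antidiagonal_eq_sum_range_succ (fun i j => (i : ℚ) * H i * H j) n).symm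
  have hS_swap : S = ∑ p ∈ antidiagonal n, (p.2 : ℚ) * H p.1 * H p.2 :=
    (sum_antidiagonal_comm (fun i j => (j : ℚ) * H j * H i) n).trans
      (sum_congr rfl fun _ _ => by ring)
  have hS_double : 2 * S = n * ∑ p ∈ antidiagonal n, H p.1 * H p.2 := by
    rw [two_mul]
    nth_rewrite 2 [hS_swap]
    rw [← sum_add_distrib, mul_sum]
    refine sum_congr rfl fun p hp => ?_
    rw [← mem_antidiagonal.mp hp]
    push_cast
    ring
  rw [sum_antidiagonal_H_mul_H] at hS_double
  rw [hS]
  linear_combination hS_double / 2
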